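/- If bounded operators Φ and Ψ on a Hilbert space satisfy ΦΦ† = 1 + ΨΨ† and Φ†Φ = 1 + Ψ^T Ψ̄ (the bosonic Bogolyubov relations), then Φ has a bounded inverse and the operator X := Ψ̄Φ⁻¹ satisfies ‖X‖ < 1. -/

import Mathlib

/-! Pairing `Φ†Φ = 1 + Ψ̄†Ψ̄` with `x` gives `‖Φ x‖² = ‖x‖² + ‖Ψ̄ x‖²`, so `Φ` is bounded below;
likewise `ΦΦ† = 1 + ΨΨ†` makes `Φ†` bounded below, hence injective, so `Φ` has dense range and
is invertible. For `y = Φ x` we get `‖Ψ̄ Φ⁻¹ y‖² = ‖y‖² - ‖x‖²`, and `‖y‖ ≤ ‖Φ‖ ‖x‖` turns this into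
`‖Ψ̄ Φ⁻¹ y‖² ≤ ‖Φ‖² / (1 + ‖Φ‖²) · ‖y‖²`. -/

open ContinuousLinearMap

namespace ContinuousLinearMap

section Normed

variable {𝕜 E F G : Type*} [RCLike 𝕜]
  [NormedAddCommGroup E] [NormedSpace 𝕜 E] [NormedAddCommGroup F] [NormedSpace 𝕜 F]
  [NormedAddCommGroup G] [NormedSpace 𝕜 G]

theorem opNorm_lt_one_of_norm_sq_le {T : E →L[𝕜] F} {k : ℝ} (hk : k < 1)
    (hT : ∀ x, ‖T x‖ ^ 2 ≤ k * ‖x‖ ^ 2) : ‖T‖ < 1 := by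
  refine (opNorm_le_bound T (Real.sqrt_nonneg k) fun x => ?_).trans_lt
    ((Real.sqrt_lt' one_pos).2 (by rwa [one_pow]))
  calc ‖T x‖ = √(‖T x‖ ^ 2) := (Real.sqrt_sq (norm_nonneg _)).symm
    _ ≤ √(k * ‖x‖ ^ 2) := Real.sqrt_le_sqrt (hT x)
    _ = √k * ‖x‖ := by rw [Real.sqrt_mul' k (sq_nonneg _), Real.sqrt_sq (norm_nonneg _)]

theorem opNorm_comp_lt_one_of_norm_sq_eq_add {A : E →L[𝕜] F} {B : E →L[𝕜] G}
    (hAB : ∀ x, ‖A x‖ ^ 2 = ‖x‖ ^ 2 + ‖B x‖ ^ 2) {R : F →L[𝕜] E} (hR : A ∘L R = 1) :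
    ‖B ∘L R‖ < 1 := by
  have hk : ‖A‖ ^ 2 / (1 + ‖A‖ ^ 2) < 1 := (div_lt_one (by positivity)).2 (by linarith)
  refine opNorm_lt_one_of_norm_sq_le hk fun y => ?_
  have hy : A (R y) = y := congr($hR y)
  have hsplit := hAB (R y)
  rw [hy] at hsplit
  have hyR : ‖y‖ ≤ ‖A‖ * ‖R y‖ := by simpa only [hy] using A.le_opNorm (R y)
  rw [comp_apply, div_mul_eq_mul_div, le_div_iff₀ (by positivity)]
  nlinarith [norm_nonneg y, norm_nonneg (R y), norm_nonneg A, sq_nonneg (‖B (R y)‖)]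

end Normed

section Hilbert

variable {𝕜 E F G : Type*} [RCLike 𝕜]
  [NormedAddCommGroup E] [InnerProductSpace 𝕜 E] [CompleteSpace E]
  [NormedAddCommGroup F] [InnerProductSpace 𝕜 F] [CompleteSpace F]
  [NormedAddCommGroup G] [InnerProductSpace 𝕜 G] [CompleteSpace G]

theorem norm_sq_apply_eq_add_of_adjoint_comp_self_eq {A : E →L[𝕜] F} {B : E →L[𝕜] G}
    (h : adjoint A ∘L A = 1 + adjoint B ∘L B) (x : E) :
    ‖A x‖ ^ 2 = ‖x‖ ^ 2 + ‖B x‖ ^ 2 := by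
  rw [apply_norm_sq_eq_inner_adjoint_left, h, apply_norm_sq_eq_inner_adjoint_left B, add_apply,
    inner_add_left, map_add, one_apply_eq_self, inner_self_eq_norm_sq]

theorem isUnit_of_antilipschitz_of_injective_adjoint {A : E →L[𝕜] E} {K : NNReal}
    (hA : AntilipschitzWith K A) (hA' : Function.Injective (adjoint A)) : IsUnit A := by
  rw [isUnit_iff_bijective, bijective_iff_dense_range_and_antilipschitz]
  refine ⟨?_, K, hA⟩
  rw [Submodule.topologicalClosure_eq_top_iff, orthogonal_range]
  exact LinearMap.ker_eq_bot.2 hA'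

theorem antilipschitzWith_one_of_adjoint_comp_self_eq {A : E →L[𝕜] F} {B : E →L[𝕜] G}
    (h : adjoint A ∘L A = 1 + adjoint B ∘L B) : AntilipschitzWith 1 A :=
  A.antilipschitz_of_bound fun x => by
    have hsq : ‖x‖ ^ 2 ≤ ‖A x‖ ^ 2 := by
      rw [norm_sq_apply_eq_add_of_adjoint_comp_self_eq h x]
      exact le_add_of_nonneg_right (sq_nonneg _)
    simpa using (sq_le_sq₀ (norm_nonneg _) (norm_nonneg _)).1 hsq

end Hilbert

end ContinuousLinearMap

theorem bosonic_bogolyubov_inverse_norm_lt_one_general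
    {H : Type*} [NormedAddCommGroup H] [InnerProductSpace ℂ H] [CompleteSpace H]
    (Φ Ψ Ψbar ΨT : H →L[ℂ] H)
    (hT : ΨT = adjoint Ψbar)
    (h1 : Φ ∘L adjoint Φ = 1 + Ψ ∘L adjoint Ψ)
    (h2 : adjoint Φ ∘L Φ = 1 + ΨT ∘L Ψbar) :
    ∃ Φinv : H →L[ℂ] H, Φ ∘L Φinv = 1 ∧ Φinv ∘L Φ = 1 ∧ ‖Ψbar ∘L Φinv‖ < 1 := by
  subst hT
  have h1_adjoint : adjoint (adjoint Φ) ∘L adjoint Φ = 1 + adjoint (adjoint Ψ) ∘L adjoint Ψ := by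
    simpa only [adjoint_adjoint] using h1
  obtain ⟨u, rfl⟩ := isUnit_of_antilipschitz_of_injective_adjoint
    (antilipschitzWith_one_of_adjoint_comp_self_eq h2)
    (antilipschitzWith_one_of_adjoint_comp_self_eq h1_adjoint).injective
  have hr := u.mul_inv
  have hl := u.inv_mul
  rw [mul_def] at hr hl
  exact ⟨_, hr, hl, opNorm_comp_lt_one_of_norm_sq_eq_add
    (norm_sq_apply_eq_add_of_adjoint_comp_self_eq h2) hr⟩

/-- If bounded operators Φ and Ψ on a complex Hilbert space satisfy the bosonic
Bogolyubov relations ΦΦ† = 1 + ΨΨ† and Φ†Φ = 1 + Ψᵀ Ψ̄ (where the bar is conjugation with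
respect to a fixed antiunitary conjugation `J` and Ψᵀ = (Ψ̄)†), then Φ has a bounded
(two-sided) inverse and X := Ψ̄ Φ⁻¹ satisfies ‖X‖ < 1. -/
theorem bosonic_bogolyubov_inverse_norm_lt_one
    {H : Type*} [NormedAddCommGroup H] [InnerProductSpace ℂ H] [CompleteSpace H]
    (J : H → H)
    (hJadd : ∀ x y, J (x + y) = J x + J y)
    (hJsmul : ∀ (c : ℂ) (x : H), J (c • x) = (starRingEnd ℂ) c • J x)
    (hJinv : ∀ x, J (J x) = x)
    (hJnorm : ∀ x, ‖J x‖ = ‖x‖)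
    (Φ Ψ Ψbar ΨT : H →L[ℂ] H)
    (hbar : ∀ x, Ψbar x = J (Ψ (J x)))
    (hT : ΨT = adjoint Ψbar)
    (h1 : Φ ∘L adjoint Φ = 1 + Ψ ∘L adjoint Ψ)
    (h2 : adjoint Φ ∘L Φ = 1 + ΨT ∘L Ψbar) :
    ∃ Φinv : H →L[ℂ] H, Φ ∘L Φinv = 1 ∧ Φinv ∘L Φ = 1 ∧ ‖Ψbar ∘L Φinv‖ < 1 :=
  bosonic_bogolyubov_inverse_norm_lt_one_general Φ Ψ Ψbar ΨT hT h1 h2
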